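/- Let k ≥ 2 be an integer, a = π/k, and let q be a complex-valued integrable function on (0,π). Then for every nonzero complex number ρ, the characteristic function Δ_{0,1}(ρ²) := C(0,ρ)·S'(π,ρ) − S(0,ρ)·C'(π,ρ) satisfies Δ_{0,1}(ρ²) = cos(ρπ) + ρ^{−1}·∫_0^π W_{0,1}(t)·sin(ρt) dt, where W_{0,1} is the function associated with q. -/

import Mathlib

open MeasureTheory intervalIntegral

/-- The function `W_{0,1}` associated with `q`, where `a = π/k`. -/
noncomputable def W01 (k : ℕ) (q : ℝ → ℂ) (t : ℝ) : ℂ :=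
  let a := Real.pi / k
  if t ∈ Set.Ioo 0 a then
    (q (((k : ℝ) - 1) * a + t) - q (((k : ℝ) - 1) * a - t)) / 2
  else if t ∈ Set.Ioo a (((k : ℝ) - 1) * a) then
    (q (((k : ℝ) + 1) * a - t) - q (((k : ℝ) - 1) * a - t)) / 2
  else if t ∈ Set.Ioo (((k : ℝ) - 1) * a) Real.pi then
    (q (((k : ℝ) + 1) * a - t) + q (t - ((k : ℝ) - 1) * a)) / 2
  else 0

/-- The solution `C(x,ρ)` of the frozen-argument equation with
`C(a,ρ) = 1`, `C'(a,ρ) = 0`. -/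
noncomputable def Cfun (a : ℝ) (q : ℝ → ℂ) (ρ : ℂ) (x : ℝ) : ℂ :=
  Complex.cos (ρ * ((x - a : ℝ) : ℂ)) +
    ρ⁻¹ * ∫ t in a..x, Complex.sin (ρ * ((x - t : ℝ) : ℂ)) * q t

/-- The `x`-derivative `C'(x,ρ)`. -/
noncomputable def Cfun' (a : ℝ) (q : ℝ → ℂ) (ρ : ℂ) (x : ℝ) : ℂ :=
  -ρ * Complex.sin (ρ * ((x - a : ℝ) : ℂ)) +
    ∫ t in a..x, Complex.cos (ρ * ((x - t : ℝ) : ℂ)) * q t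

/-- The solution `S(x,ρ)` with `S(a,ρ) = 0`, `S'(a,ρ) = 1`. -/
noncomputable def Sfun (a : ℝ) (ρ : ℂ) (x : ℝ) : ℂ :=
  Complex.sin (ρ * ((x - a : ℝ) : ℂ)) / ρ

/-- The `x`-derivative `S'(x,ρ)`. -/
noncomputable def Sfun' (a : ℝ) (ρ : ℂ) (x : ℝ) : ℂ :=
  Complex.cos (ρ * ((x - a : ℝ) : ℂ))

/-!
Expanding the determinant with the addition formula for the cosine leaves `cos ρπ` plus `ρ⁻¹` times
`cos ρ(π - a) ∫₀ᵃ sin ρt q(t) dt + sin ρa ∫ₐ^π cos ρ(π - t) q(t) dt`, and product-to-sum formulas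
turn this bracket into half of `∫₀ᵃ q(s) sin ρ(s + π - a) + ∫ₐ^π q(s) sin ρ(π + a - s) -
∫₀^π q(s) sin ρ(π - a - s)`. Away from `a` and `π - a`, `2 W_{0,1}` is a sum of four translated or
reflected copies of `q`, each restricted to a subinterval, and substituting in each of them gives the
same three integrals.
-/

open Set Complex

lemma IntervalIntegrable.mul_continuous_of_mem_Icc {f g : ℝ → ℂ} {a b c d : ℝ}
    (hf : IntervalIntegrable f volume a b) (hg : Continuous g) (hc : c ∈ Icc a b)
    (hd : d ∈ Icc a b) : IntervalIntegrable (fun s => f s * g s) volume c d :=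
  (hf.mono_set (uIcc_subset_uIcc (Icc_subset_uIcc hc) (Icc_subset_uIcc hd))).mul_continuousOn
    hg.continuousOn

lemma IntervalIntegrable.integrable_indicator_Ioo {f : ℝ → ℂ} {c d : ℝ}
    (hf : IntervalIntegrable f volume c d) (hcd : c ≤ d) :
    Integrable ((Ioo c d).indicator f) :=
  (integrable_indicator_iff measurableSet_Ioo).2
    ((intervalIntegrable_iff_integrableOn_Ioo_of_le hcd).1 hf)

lemma intervalIntegral.integral_indicator_Ioo {f : ℝ → ℂ} {a b c d : ℝ} (hac : a ≤ c)
    (hcd : c ≤ d) (hdb : d ≤ b) : ∫ t in a..b, (Ioo c d).indicator f t = ∫ t in c..d, f t := by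
  rw [integral_of_le (hac.trans (hcd.trans hdb)), integral_of_le hcd,
    MeasureTheory.integral_indicator measurableSet_Ioo,
    Measure.restrict_restrict measurableSet_Ioo,
    inter_eq_left.2 (Ioo_subset_Ioc_self.trans (Ioc_subset_Ioc hac hdb)),
    integral_Ioc_eq_integral_Ioo]

section

variable {q : ℝ → ℂ} {ρ : ℂ} {a L : ℝ}

lemma cos_mul_integral_add_sin_mul_integral (ha : 0 ≤ a) (haL : a ≤ L)
    (hq : IntervalIntegrable q volume 0 L) :
    cos (ρ * (L - a : ℝ)) * (∫ t in 0..a, sin (ρ * t) * q t) +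
        sin (ρ * a) * ∫ t in a..L, cos (ρ * (L - t : ℝ)) * q t =
      ((∫ s in 0..a, q s * sin (ρ * (s + (L - a) : ℝ))) +
          (∫ s in a..L, q s * sin (ρ * (L + a - s : ℝ))) -
          ∫ s in 0..L, q s * sin (ρ * (L - a - s : ℝ))) / 2 := by
  have h0 : (0 : ℝ) ∈ Icc 0 L := ⟨le_rfl, ha.trans haL⟩
  have hL : L ∈ Icc 0 L := ⟨ha.trans haL, le_rfl⟩
  have ha' : a ∈ Icc 0 L := ⟨ha, haL⟩
  have hleft : cos (ρ * (L - a : ℝ)) * (∫ t in 0..a, sin (ρ * t) * q t) =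
      ((∫ s in 0..a, q s * sin (ρ * (s + (L - a) : ℝ))) -
        ∫ s in 0..a, q s * sin (ρ * (L - a - s : ℝ))) / 2 := by
    rw [← integral_sub (hq.mul_continuous_of_mem_Icc (by fun_prop) h0 ha')
        (hq.mul_continuous_of_mem_Icc (by fun_prop) h0 ha'),
      ← intervalIntegral.integral_div, ← intervalIntegral.integral_const_mul]
    refine integral_congr fun s _ => ?_
    push_cast
    simp only [mul_add, mul_sub, sin_add, sin_sub, cos_sub]
    ring
  have hright : sin (ρ * a) * ∫ t in a..L, cos (ρ * (L - t : ℝ)) * q t =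
      ((∫ s in a..L, q s * sin (ρ * (L + a - s : ℝ))) -
        ∫ s in a..L, q s * sin (ρ * (L - a - s : ℝ))) / 2 := by
    rw [← integral_sub (hq.mul_continuous_of_mem_Icc (by fun_prop) ha' hL)
        (hq.mul_continuous_of_mem_Icc (by fun_prop) ha' hL),
      ← intervalIntegral.integral_div, ← intervalIntegral.integral_const_mul]
    refine integral_congr fun s _ => ?_
    push_cast
    simp only [mul_add, mul_sub, sin_add, sin_sub, cos_add, cos_sub]
    ring
  rw [hleft, hright, ← integral_add_adjacent_intervals
    (hq.mul_continuous_of_mem_Icc (by fun_prop) h0 ha')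
    (hq.mul_continuous_of_mem_Icc (by fun_prop) ha' hL)]
  ring

lemma integral_indicator_shifts_mul_sin (ha : 0 ≤ a) (hab : a ≤ L - a)
    (hq : IntervalIntegrable q volume 0 L) :
    ∫ t in 0..L, ((Ioo (L - a) L).indicator (fun t => q (t - (L - a)) * sin (ρ * t)) t +
        (Ioo a L).indicator (fun t => q (L + a - t) * sin (ρ * t)) t -
        (Ioo 0 (L - a)).indicator (fun t => q (L - a - t) * sin (ρ * t)) t +
        (Ioo 0 a).indicator (fun t => q (L - a + t) * sin (ρ * t)) t) =
      (∫ t in (L - a)..L, q (t - (L - a)) * sin (ρ * t)) +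
        (∫ t in a..L, q (L + a - t) * sin (ρ * t)) -
        (∫ t in 0..(L - a), q (L - a - t) * sin (ρ * t)) +
        ∫ t in 0..a, q (L - a + t) * sin (ρ * t) := by
  have h0 : (0 : ℝ) ∈ Icc 0 L := ⟨le_rfl, by linarith⟩
  have hL : L ∈ Icc 0 L := ⟨by linarith, le_rfl⟩
  have ha' : a ∈ Icc 0 L := ⟨ha, by linarith⟩
  have hb' : L - a ∈ Icc 0 L := ⟨by linarith, by linarith⟩
  have int₁ : IntervalIntegrable (fun t => q (t - (L - a)) * sin (ρ * t)) volume (L - a) L := by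
    simpa using (hq.mul_continuous_of_mem_Icc (g := fun s => sin (ρ * (s + (L - a) : ℝ)))
      (by fun_prop) h0 ha').comp_sub_right (L - a)
  have int₂ : IntervalIntegrable (fun t => q (L + a - t) * sin (ρ * t)) volume a L := by
    simpa using ((hq.mul_continuous_of_mem_Icc (g := fun s => sin (ρ * (L + a - s : ℝ)))
      (by fun_prop) ha' hL).comp_sub_left (L + a)).symm
  have int₃ : IntervalIntegrable (fun t => q (L - a - t) * sin (ρ * t)) volume 0 (L - a) := by
    simpa using ((hq.mul_continuous_of_mem_Icc (g := fun s => sin (ρ * (L - a - s : ℝ)))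
      (by fun_prop) h0 hb').comp_sub_left (L - a)).symm
  have int₄ : IntervalIntegrable (fun t => q (L - a + t) * sin (ρ * t)) volume 0 a := by
    simpa using (hq.mul_continuous_of_mem_Icc (g := fun s => sin (ρ * (s - (L - a) : ℝ)))
      (by fun_prop) hb' hL).comp_add_left (L - a)
  have ind₁ := (int₁.integrable_indicator_Ioo hb'.2).intervalIntegrable (a := 0) (b := L)
  have ind₂ := (int₂.integrable_indicator_Ioo ha'.2).intervalIntegrable (a := 0) (b := L)
  have ind₃ := (int₃.integrable_indicator_Ioo hb'.1).intervalIntegrable (a := 0) (b := L)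
  have ind₄ := (int₄.integrable_indicator_Ioo ha'.1).intervalIntegrable (a := 0) (b := L)
  rw [integral_add ((ind₁.add ind₂).sub ind₃) ind₄, integral_sub (ind₁.add ind₂) ind₃,
    integral_add ind₁ ind₂, integral_indicator_Ioo hb'.1 hb'.2 le_rfl,
    integral_indicator_Ioo ha'.1 ha'.2 le_rfl, integral_indicator_Ioo le_rfl hb'.1 hb'.2,
    integral_indicator_Ioo le_rfl ha'.1 ha'.2]

lemma integral_shifts_mul_sin (ha : 0 ≤ a) (hab : a ≤ L - a)
    (hq : IntervalIntegrable q volume 0 L) :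
    (∫ t in (L - a)..L, q (t - (L - a)) * sin (ρ * t)) +
        (∫ t in a..L, q (L + a - t) * sin (ρ * t)) -
        (∫ t in 0..(L - a), q (L - a - t) * sin (ρ * t)) +
        ∫ t in 0..a, q (L - a + t) * sin (ρ * t) =
      (∫ s in 0..a, q s * sin (ρ * (s + (L - a) : ℝ))) +
        (∫ s in a..L, q s * sin (ρ * (L + a - s : ℝ))) -
        ∫ s in 0..L, q s * sin (ρ * (L - a - s : ℝ)) := by
  have hb' : L - a ∈ Icc 0 L := ⟨by linarith, by linarith⟩
  have sub₁ : ∫ t in (L - a)..L, q (t - (L - a)) * sin (ρ * t) =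
      ∫ s in 0..a, q s * sin (ρ * (s + (L - a) : ℝ)) := by
    simpa using integral_comp_sub_right (a := L - a) (b := L)
      (fun s => q s * sin (ρ * (s + (L - a) : ℝ))) (L - a)
  have sub₂ : ∫ t in a..L, q (L + a - t) * sin (ρ * t) =
      ∫ s in a..L, q s * sin (ρ * (L + a - s : ℝ)) := by
    simpa using integral_comp_sub_left (a := a) (b := L)
      (fun s => q s * sin (ρ * (L + a - s : ℝ))) (L + a)
  have sub₃ : ∫ t in 0..(L - a), q (L - a - t) * sin (ρ * t) =
      ∫ s in 0..(L - a), q s * sin (ρ * (L - a - s : ℝ)) := by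
    simpa using integral_comp_sub_left (a := 0) (b := L - a)
      (fun s => q s * sin (ρ * (L - a - s : ℝ))) (L - a)
  have sub₄ : ∫ t in 0..a, q (L - a + t) * sin (ρ * t) =
      -∫ s in (L - a)..L, q s * sin (ρ * (L - a - s : ℝ)) := by
    rw [← intervalIntegral.integral_neg]
    simpa using integral_comp_add_left (a := 0) (b := a)
      (fun s => -(q s * sin (ρ * (L - a - s : ℝ)))) (L - a)
  rw [sub₁, sub₂, sub₃, sub₄, ← integral_add_adjacent_intervals
    (hq.mul_continuous_of_mem_Icc (by fun_prop) ⟨le_rfl, hb'.1.trans hb'.2⟩ hb')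
    (hq.mul_continuous_of_mem_Icc (by fun_prop) hb' ⟨hb'.1.trans hb'.2, le_rfl⟩)]
  ring

end

lemma pi_div_natCast_pos_and_le {k : ℕ} (hk : 2 ≤ k) :
    0 < Real.pi / k ∧ Real.pi / k ≤ Real.pi - Real.pi / k := by
  have hk' : (2 : ℝ) ≤ k := by exact_mod_cast hk
  refine ⟨div_pos Real.pi_pos (by linarith), ?_⟩
  rw [le_sub_iff_add_le, ← two_mul, mul_div_assoc', div_le_iff₀ (by linarith)]
  nlinarith [Real.pi_pos]

lemma two_mul_W01 {k : ℕ} (hk : 2 ≤ k) (q : ℝ → ℂ) {a t : ℝ} (ha : a = Real.pi / k)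
    (ht : t ∈ Ioo 0 Real.pi) (hta : t ≠ a) (htb : t ≠ Real.pi - a) :
    2 * W01 k q t =
      (Ioo (Real.pi - a) Real.pi).indicator (fun t => q (t - (Real.pi - a))) t +
        (Ioo a Real.pi).indicator (fun t => q (Real.pi + a - t)) t -
        (Ioo 0 (Real.pi - a)).indicator (fun t => q (Real.pi - a - t)) t +
        (Ioo 0 a).indicator (fun t => q (Real.pi - a + t)) t := by
  obtain ⟨-, hab⟩ := pi_div_natCast_pos_and_le hk
  rw [← ha] at hab
  have hka : (k : ℝ) * a = Real.pi := by
    rw [ha, mul_div_cancel₀ _ (by norm_cast; omega)]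
  have hm : ((k : ℝ) - 1) * a = Real.pi - a := by linear_combination hka
  have hp : ((k : ℝ) + 1) * a = Real.pi + a := by linear_combination hka
  simp only [W01, ← ha, hm, hp]
  obtain ⟨ht0, htπ⟩ := ht
  rcases hta.lt_or_gt with h1 | h1
  · simp only [mem_Ioo, indicator, ht0, h1, h1.not_gt, h1.trans_le hab, (h1.trans_le hab).not_gt,
      and_self, false_and, ↓reduceIte, add_comm, add_zero, zero_sub]
    ring
  rcases htb.lt_or_gt with h2 | h2
  · simp only [mem_Ioo, indicator, ht0, htπ, h1, h2, h1.not_gt, h2.not_gt, and_self, and_true,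
      and_false, ↓reduceIte, zero_add, add_zero]
    ring
  · simp only [mem_Ioo, indicator, ht0, htπ, h1, h2, h1.not_gt, h2.not_gt, and_self, and_false,
      ↓reduceIte, sub_zero, add_zero]
    ring

lemma integral_W01_mul_sin {k : ℕ} (hk : 2 ≤ k) {q : ℝ → ℂ}
    (hq : IntervalIntegrable q volume 0 Real.pi) (ρ : ℂ) {a : ℝ} (ha : a = Real.pi / k) :
    ∫ t in 0..Real.pi, W01 k q t * sin (ρ * t) =
      cos (ρ * (Real.pi - a : ℝ)) * (∫ t in 0..a, sin (ρ * t) * q t) +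
        sin (ρ * a) * ∫ t in a..Real.pi, cos (ρ * (Real.pi - t : ℝ)) * q t := by
  obtain ⟨ha0, hab⟩ := pi_div_natCast_pos_and_le hk
  rw [← ha] at ha0 hab
  have hW : ∀ᵐ t, t ∈ uIoc 0 Real.pi → W01 k q t * sin (ρ * t) =
      ((Ioo (Real.pi - a) Real.pi).indicator (fun t => q (t - (Real.pi - a)) * sin (ρ * t)) t +
        (Ioo a Real.pi).indicator (fun t => q (Real.pi + a - t) * sin (ρ * t)) t -
        (Ioo 0 (Real.pi - a)).indicator (fun t => q (Real.pi - a - t) * sin (ρ * t)) t +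
        (Ioo 0 a).indicator (fun t => q (Real.pi - a + t) * sin (ρ * t)) t) / 2 := by
    filter_upwards [Measure.ae_ne volume a, Measure.ae_ne volume (Real.pi - a),
      Measure.ae_ne volume Real.pi] with t hta htb htπ ht
    rw [uIoc_of_le Real.pi_pos.le] at ht
    simp only [indicator_mul_left]
    rw [eq_div_iff two_ne_zero]
    linear_combination sin (ρ * t) * two_mul_W01 hk q ha ⟨ht.1, ht.2.lt_of_ne htπ⟩ hta htb
  rw [integral_congr_ae hW, intervalIntegral.integral_div,
    integral_indicator_shifts_mul_sin ha0.le hab hq, integral_shifts_mul_sin ha0.le hab hq,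
    cos_mul_integral_add_sin_mul_integral ha0.le (by linarith) hq]

theorem charFunction_rep_dirichlet_neumann (k : ℕ) (hk : 2 ≤ k)
    (q : ℝ → ℂ) (hq : IntegrableOn q (Set.Ioo 0 Real.pi))
    (ρ : ℂ) (hρ : ρ ≠ 0) :
    Cfun (Real.pi / k) q ρ 0 * Sfun' (Real.pi / k) ρ Real.pi -
      Sfun (Real.pi / k) ρ 0 * Cfun' (Real.pi / k) q ρ Real.pi =
    Complex.cos (ρ * Real.pi) +
      ρ⁻¹ * ∫ t in (0:ℝ)..Real.pi, W01 k q t * Complex.sin (ρ * (t : ℂ)) := by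
  set a := Real.pi / k with ha
  have hq' : IntervalIntegrable q volume 0 Real.pi :=
    (intervalIntegrable_iff_integrableOn_Ioo_of_le Real.pi_pos.le).2 hq
  have hflip : ∫ t in a..0, sin (ρ * (0 - t : ℝ)) * q t = ∫ t in 0..a, sin (ρ * t) * q t := by
    rw [integral_symm, ← intervalIntegral.integral_neg]
    refine integral_congr fun t _ => ?_
    simp
  have hcos : cos (ρ * Real.pi) = cos (ρ * a) * cos (ρ * (Real.pi - a : ℝ)) -
      sin (ρ * a) * sin (ρ * (Real.pi - a : ℝ)) := by
    rw [← cos_add]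
    push_cast
    ring_nf
  rw [integral_W01_mul_sin hk hq' ρ ha, hcos]
  simp only [Cfun, Cfun', Sfun, Sfun']
  rw [hflip]
  simp only [zero_sub, ofReal_neg, mul_neg, cos_neg, sin_neg]
  field_simp
  ring
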